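/- arXiv:1407.8222 — 3 statements merged into one kernel-verified Lean document; each statement's English description precedes it below -/
import Mathlib

section
/- Define f : ℕ → ℕ by f(3k) = binomial(2k,k)³, f(3k+1) = 4·binomial(2k,k)³, and f(3k+2) = 16·binomial(2k,k)³ for all k ∈ ℕ. Then f is a binomial multisum and f(n)/C_n → 3√3/π as n → ∞, where C_n is the n-th Catalan number; that is, f(n) ∼ (3√3/π)·C_n. -/
/-- Modified binomial coefficient: `C(a,b) = a!/((a-b)!·b!)` if `0 ≤ b ≤ a`,
`C(-1,0) = 1`, and `0` otherwise. -/
def mbinom (a b : ℤ) : ℕ :=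
  if 0 ≤ b ∧ b ≤ a then a.toNat.choose b.toNat
  else if a = -1 ∧ b = 0 then 1 else 0

/-- The general term of a binomial multisum, indexed by `v ∈ ℤ^d`. -/
def multisumTerm {r d : ℕ} (A B : Fin r → Fin d → ℤ) (a' a'' b' b'' : Fin r → ℤ)
    (n : ℕ) (v : Fin d → ℤ) : ℕ :=
  ∏ i, mbinom ((∑ j, A i j * v j) + a' i * (n : ℤ) + a'' i)
              ((∑ j, B i j * v j) + b' i * (n : ℤ) + b'' i)

/-- `f : ℕ → ℕ` is a binomial multisum: for every `n` only finitely many `v ∈ ℤ^d`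
contribute, and `f n` is the (finite) sum of the products of modified binomial
coefficients of integer-coefficient affine functions of `(v, n)`. -/
def IsBinomialMultisum (f : ℕ → ℕ) : Prop :=
  ∃ (r d : ℕ) (A B : Fin r → Fin d → ℤ) (a' a'' b' b'' : Fin r → ℤ),
    (∀ n : ℕ, (Function.support (multisumTerm A B a' a'' b' b'' n)).Finite) ∧
    ∀ n : ℕ, f n = ∑ᶠ v : Fin d → ℤ, multisumTerm A B a' a'' b' b'' n v

/-! Write `n = 3k + r` with `r < 3`, so that `f n = 4 ^ r · C(2k, k)³`. This is the binomial
multisum over `v ∈ ℤ²` of `C(3v₀ - n + 2, 3v₀ - n + 2) · C(2v₀, v₀)³ · C(2n - 6v₀, v₁)`: the first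
factor is the indicator of `3v₀ ≥ n - 2` and the last vanishes unless `3v₀ ≤ n`, which pins
`v₀ = k`; what remains is `C(2k, k)³ · ∑ C(2r, v₁) = 4 ^ r · C(2k, k)³`.

Stirling's formula gives `C(2k, k) ∼ 4 ^ k / √(πk)`, hence `C_n ∼ 4 ^ n / (√(πn) (n + 1))`, and
along each residue class `4 ^ r C(2k, k)³ / C_n ∼ (n + 1) √n / (π k √k) → 3√3 / π`. -/

open Function Set Filter Asymptotics Real Topology Stirling Nat

lemma mbinom_natCast (a b : ℕ) : mbinom a b = a.choose b := by
  unfold mbinom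
  split_ifs
  · simp
  · omega
  · exact (choose_eq_zero_of_lt (by omega)).symm

lemma mbinom_self (a : ℤ) : mbinom a a = if 0 ≤ a then 1 else 0 := by
  unfold mbinom
  split_ifs <;> first | omega | simp

lemma mbinom_of_lt_neg_one {a b : ℤ} (ha : a < -1) : mbinom a b = 0 := by
  unfold mbinom
  split_ifs <;> omega

lemma support_mbinom_natCast_subset (m : ℕ) :
    support (mbinom m) ⊆ (Finset.range (m + 1)).image ((↑) : ℕ → ℤ) := by
  intro w hw
  rw [mem_support, mbinom] at hw
  split_ifs at hw
  · simp only [Finset.coe_image, Finset.coe_range, mem_image, mem_Iio]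
    exact ⟨w.toNat, by omega, by omega⟩
  · omega
  · exact absurd rfl hw

lemma finite_support_mbinom_natCast (m : ℕ) : (support (mbinom m)).Finite :=
  (Finset.finite_toSet _).subset (support_mbinom_natCast_subset m)

lemma finsum_mbinom_natCast (m : ℕ) : ∑ᶠ w : ℤ, mbinom m w = 2 ^ m := by
  rw [finsum_eq_sum_of_support_subset _ (support_mbinom_natCast_subset m),
    Finset.sum_image (fun _ _ _ _ h => Nat.cast_injective h)]
  simp only [mbinom_natCast, sum_range_choose]

section FinTwo

variable {α M : Type*} [DecidableEq α] [AddCommMonoid M]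

lemma support_ite_fin_two_subset (a : α) (g : α → M) :
    support (fun v : Fin 2 → α => if v 0 = a then g (v 1) else 0) ⊆
      (fun w => ![a, w]) '' support g := by
  intro v hv
  by_cases h : v 0 = a
  · simp only [mem_support, h, if_true] at hv
    refine ⟨v 1, hv, ?_⟩
    ext i
    fin_cases i <;> simp [h]
  · simp [h] at hv

lemma finsum_ite_fin_two (a : α) (g : α → M) :
    ∑ᶠ v : Fin 2 → α, (if v 0 = a then g (v 1) else 0) = ∑ᶠ w, g w := by
  have hrange : support (fun v : Fin 2 → α => if v 0 = a then g (v 1) else 0) ⊆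
      range (fun w => ![a, w]) :=
    (support_ite_fin_two_subset a g).trans (image_subset_range _ _)
  rw [← finsum_mem_univ, finsum_mem_inter_support_eq' _ univ (range fun w => ![a, w])
    fun v hv => iff_of_true trivial (hrange hv), finsum_mem_range]
  · simp
  · intro w w' h
    simpa using congrFun h 1

end FinTwo

def tileCount (n : ℕ) : ℕ := 4 ^ (n % 3) * (n / 3).centralBinom ^ 3

def tileA : Fin 5 → Fin 2 → ℤ := ![![3, 0], ![2, 0], ![2, 0], ![2, 0], ![-6, 0]]
def tileB : Fin 5 → Fin 2 → ℤ := ![![3, 0], ![1, 0], ![1, 0], ![1, 0], ![0, 1]]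
def tileA' : Fin 5 → ℤ := ![-1, 0, 0, 0, 2]
def tileA'' : Fin 5 → ℤ := ![2, 0, 0, 0, 0]
def tileB' : Fin 5 → ℤ := ![-1, 0, 0, 0, 0]
def tileB'' : Fin 5 → ℤ := ![2, 0, 0, 0, 0]

lemma multisumTerm_tile_eq_mbinom (n : ℕ) (v : Fin 2 → ℤ) :
    multisumTerm tileA tileB tileA' tileA'' tileB' tileB'' n v =
      mbinom (3 * v 0 - n + 2) (3 * v 0 - n + 2) * mbinom (2 * v 0) (v 0) ^ 3 *
        mbinom (2 * n - 6 * v 0) (v 1) := by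
  simp [multisumTerm, Fin.prod_univ_five, Fin.sum_univ_two, tileA, tileB, tileA', tileA'',
    tileB', tileB'']
  ring_nf

lemma multisumTerm_tile (n : ℕ) (v : Fin 2 → ℤ) :
    multisumTerm tileA tileB tileA' tileA'' tileB' tileB'' n v =
      if v 0 = (n / 3 : ℕ) then (n / 3).centralBinom ^ 3 * mbinom (2 * (n % 3) : ℕ) (v 1)
      else 0 := by
  rw [multisumTerm_tile_eq_mbinom]
  split_ifs with h
  · have h₁ : 3 * v 0 - n + 2 = (2 - n % 3 : ℕ) := by omega
    have h₂ : 2 * v 0 = (2 * (n / 3) : ℕ) := by omega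
    have h₃ : 2 * (n : ℤ) - 6 * v 0 = (2 * (n % 3) : ℕ) := by omega
    rw [h₁, h₂, h₃, h, mbinom_self, if_pos (by positivity), mbinom_natCast, one_mul,
      centralBinom_eq_two_mul_choose]
  · rcases lt_or_gt_of_ne h with h | h
    · rw [mbinom_self, if_neg (by omega), zero_mul, zero_mul]
    · rw [mbinom_of_lt_neg_one (a := 2 * n - 6 * v 0) (by omega), mul_zero]

lemma isBinomialMultisum_tileCount : IsBinomialMultisum tileCount := by
  refine ⟨5, 2, tileA, tileB, tileA', tileA'', tileB', tileB'', fun n => ?_, fun n => ?_⟩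
  · rw [show multisumTerm tileA tileB tileA' tileA'' tileB' tileB'' n = _ from
      funext (multisumTerm_tile n)]
    have hfin := (finite_support_mbinom_natCast (2 * (n % 3))).subset
      (support_mul_subset_right (fun _ => (n / 3).centralBinom ^ 3) _)
    exact (hfin.image _).subset (support_ite_fin_two_subset _ (fun w => _ * mbinom _ w))
  · simp_rw [multisumTerm_tile]
    rw [finsum_ite_fin_two (g := fun w => _ * mbinom _ w), ← mul_finsum, finsum_mbinom_natCast,
      tileCount, pow_mul]
    ring

lemma centralBinom_isEquivalent :
    (fun n : ℕ => (n.centralBinom : ℝ)) ~[atTop] fun n => 4 ^ n / √(π * n) := by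
  have hfac := factorial_isEquivalent_stirling
  have htwo : Tendsto (fun n : ℕ => 2 * n) atTop atTop :=
    tendsto_atTop_mono (fun n => Nat.le_mul_of_pos_left n two_pos) tendsto_id
  refine ((hfac.comp_tendsto htwo).div (hfac.pow 2)).congr_left ?_ |>.congr_right ?_
  · refine Eventually.of_forall fun n => ?_
    simp only [Function.comp, Pi.div_apply, Pi.mul_apply, centralBinom_eq_two_mul_choose,
      Nat.cast_choose ℝ (show n ≤ 2 * n by omega), show 2 * n - n = n by omega, sq]
  · filter_upwards [eventually_ge_atTop 1] with n hn₁
    have hn : (0 : ℝ) < n := by exact_mod_cast hn₁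
    have hs : √(2 * (2 * n : ℕ) * π) = 2 * √(π * n) := by
      rw [show 2 * ((2 * n : ℕ) : ℝ) * π = 2 ^ 2 * (π * n) by push_cast; ring,
        sqrt_mul (by positivity), sqrt_sq (by positivity)]
    have hs' : √(2 * n * π) ^ 2 = 2 * √(π * n) ^ 2 := by
      rw [sq_sqrt (by positivity), sq_sqrt (by positivity)]; ring
    have hp : ((2 * n : ℕ) / exp 1 : ℝ) ^ (2 * n) = 4 ^ n * ((n / exp 1) ^ n) ^ 2 := by
      rw [pow_mul, show (((2 * n : ℕ) : ℝ) / exp 1) ^ 2 = 4 * (n / exp 1) ^ 2 by push_cast; ring,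
        mul_pow, ← pow_mul, ← pow_mul, mul_comm 2 n]
    simp only [Function.comp, Pi.div_apply, Pi.pow_apply, mul_pow, hs, hs', hp]
    have hs₀ : 0 < √(π * n) := by positivity
    field_simp

lemma catalan_isEquivalent :
    (fun n : ℕ => (catalan n : ℝ)) ~[atTop] fun n => 4 ^ n / (√(π * n) * (n + 1)) := by
  refine (centralBinom_isEquivalent.div (IsEquivalent.refl (u := fun n : ℕ => (n + 1 : ℝ))))
    |>.congr_left (Eventually.of_forall fun n => ?_)
    |>.congr_right (Eventually.of_forall fun n => ?_)
  · rw [Pi.div_apply, ← succ_mul_catalan_eq_centralBinom]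
    push_cast
    field_simp
  · simp only [Pi.div_apply, div_div]

lemma tendsto_four_pow_mul_centralBinom_pow_three_div_catalan (r : ℕ) :
    Tendsto (fun k : ℕ => 4 ^ r * (k.centralBinom : ℝ) ^ 3 / catalan (3 * k + r)) atTop
      (𝓝 (3 * √3 / π)) := by
  have hlin : Tendsto (fun k : ℕ => 3 * k + r) atTop atTop :=
    tendsto_atTop_mono (fun k => show k ≤ 3 * k + r by omega) tendsto_id
  have hequiv := ((IsEquivalent.refl (u := fun _ : ℕ => (4 : ℝ) ^ r)).mul
    (centralBinom_isEquivalent.pow 3)).div (catalan_isEquivalent.comp_tendsto hlin)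
  refine hequiv.symm.tendsto_nhds ?_
  have hlim : Tendsto
      (fun k : ℕ => ((r + 1 : ℝ) + 3 * k) / (0 + 1 * k) * √((r + 3 * k) / (0 + 1 * k)) / π)
      atTop (𝓝 (3 / 1 * √(3 / 1) / π)) :=
    ((tendsto_add_mul_div_add_mul_atTop_nhds _ _ _ one_ne_zero).mul
      (tendsto_add_mul_div_add_mul_atTop_nhds _ _ _ one_ne_zero).sqrt).div_const π
  simp only [zero_add, one_mul, div_one] at hlim
  refine hlim.congr' ?_
  filter_upwards [eventually_ge_atTop 1] with k hk
  have hk : (0 : ℝ) < k := by exact_mod_cast hk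
  simp only [Function.comp, Pi.div_apply, Pi.mul_apply, Pi.pow_apply]
  rw [sqrt_mul pi_pos.le, sqrt_mul pi_pos.le, sqrt_div (by positivity), pow_add, pow_mul]
  push_cast
  field_simp
  rw [sq_sqrt pi_pos.le, sq_sqrt hk.le, ← pow_mul, ← pow_mul, add_comm (r : ℝ) (3 * k)]
  ring

lemma tendsto_of_forall_tendsto_mul_add {α : Type*} {u : ℕ → α} {l : Filter α} {m : ℕ}
    (hm : 0 < m) (h : ∀ r < m, Tendsto (fun k => u (m * k + r)) atTop l) :
    Tendsto u atTop l := by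
  intro s hs
  obtain ⟨N, hN⟩ := eventually_atTop.1 <| eventually_all.2 fun r : Fin m => h r r.isLt hs
  refine eventually_atTop.2 ⟨m * N, fun n hn => ?_⟩
  have hN' : N ≤ n / m := (Nat.le_div_iff_mul_le hm).2 (by linarith [mul_comm m N])
  simpa only [Nat.div_add_mod] using hN (n / m) hN' ⟨n % m, Nat.mod_lt n hm⟩

lemma tendsto_tileCount_div_catalan :
    Tendsto (fun n => (tileCount n : ℝ) / catalan n) atTop (𝓝 (3 * √3 / π)) := by
  refine tendsto_of_forall_tendsto_mul_add three_pos fun r hr => ?_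
  refine (tendsto_four_pow_mul_centralBinom_pow_three_div_catalan r).congr fun k => ?_
  rw [tileCount, show (3 * k + r) / 3 = k by omega, show (3 * k + r) % 3 = r by omega]
  norm_cast

/-- The function defined by `f(3k) = C(2k,k)³`, `f(3k+1) = 4·C(2k,k)³`,
`f(3k+2) = 16·C(2k,k)³` is a binomial multisum (= tile counting function) and satisfies
`f(n) ∼ (3√3/π)·C_n`, where `C_n` is the `n`-th Catalan number. -/
theorem tileCounting_asymptotically_catalan (f : ℕ → ℕ)
    (h0 : ∀ k : ℕ, f (3 * k) = Nat.choose (2 * k) k ^ 3)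
    (h1 : ∀ k : ℕ, f (3 * k + 1) = 4 * Nat.choose (2 * k) k ^ 3)
    (h2 : ∀ k : ℕ, f (3 * k + 2) = 16 * Nat.choose (2 * k) k ^ 3) :
    IsBinomialMultisum f ∧
    Filter.Tendsto (fun n : ℕ => (f n : ℝ) / (catalan n : ℝ)) Filter.atTop
      (nhds (3 * Real.sqrt 3 / Real.pi)) := by
  have hf : f = tileCount := by
    funext n
    obtain ⟨k, r, hr, rfl⟩ : ∃ k r, r < 3 ∧ n = 3 * k + r :=
      ⟨n / 3, n % 3, Nat.mod_lt n three_pos, (Nat.div_add_mod n 3).symm⟩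
    rw [tileCount, show (3 * k + r) / 3 = k by omega, show (3 * k + r) % 3 = r by omega,
      centralBinom_eq_two_mul_choose]
    interval_cases r <;> simp [h0, h1, h2]
  subst hf
  exact ⟨isBinomialMultisum_tileCount, tendsto_tileCount_div_catalan⟩
end

section
/- Let f : ℕ → ℕ be a diagonal of an ℕ-rational generating function, and let g : ℕ → ℕ satisfy g(n) = f(n) for all n ≥ 1. Then g is also a diagonal of an ℕ-rational generating function. -/
/-- The class `𝓡_k` of ℕ-rational generating functions in `k` variables: the smallest
class of power series in `ℕ[[x₁,…,x_k]]` containing `0` and the variables, closed under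
addition and multiplication, and containing `1/(1-F)` (the unique solution `G` of
`G = 1 + F·G`) whenever it contains an `F` with zero constant term. -/
inductive NRational (k : ℕ) : MvPowerSeries (Fin k) ℕ → Prop
  | zero : NRational k 0
  | X : ∀ i : Fin k, NRational k (MvPowerSeries.X i)
  | add : ∀ {F G}, NRational k F → NRational k G → NRational k (F + G)
  | mul : ∀ {F G}, NRational k F → NRational k G → NRational k (F * G)
  | geom : ∀ {F G}, NRational k F → MvPowerSeries.constantCoeff F = 0 →
      G = 1 + F * G → NRational k G

/-!
Every ℕ-rational series is `c + F₀` with `c ∈ ℕ` and `F₀` ℕ-rational of zero constant term (for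
`G = 1 + F·G` take `F₀ = F·G`). Replacing `c` by `g 0` changes only the constant coefficient, which
is the diagonal coefficient at `n = 0` and nowhere else.
-/

open MvPowerSeries

namespace NRational

variable {k : ℕ}

theorem one : NRational k 1 :=
  .geom .zero (by simp) (by ring)

theorem natCast (c : ℕ) : NRational k c := by
  induction c with
  | zero => simpa using NRational.zero
  | succ c ih => push_cast; exact ih.add one

theorem exists_eq_natCast_add {F : MvPowerSeries (Fin k) ℕ} (hF : NRational k F) :
    ∃ (c : ℕ) (F₀ : MvPowerSeries (Fin k) ℕ),
      NRational k F₀ ∧ constantCoeff F₀ = 0 ∧ F = c + F₀ := by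
  induction hF with
  | zero => exact ⟨0, 0, .zero, by simp, by simp⟩
  | X i => exact ⟨0, _, .X i, by simp, by simp⟩
  | add _ _ ihF ihG =>
    obtain ⟨c, F₀, hF₀, hcF₀, rfl⟩ := ihF
    obtain ⟨d, G₀, hG₀, hcG₀, rfl⟩ := ihG
    exact ⟨c + d, F₀ + G₀, hF₀.add hG₀, by simp [hcF₀, hcG₀], by push_cast; ring⟩
  | mul _ _ ihF ihG =>
    obtain ⟨c, F₀, hF₀, hcF₀, rfl⟩ := ihF
    obtain ⟨d, G₀, hG₀, hcG₀, rfl⟩ := ihG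
    exact ⟨c * d, c * G₀ + d * F₀ + F₀ * G₀,
      (((natCast c).mul hG₀).add ((natCast d).mul hF₀)).add (hF₀.mul hG₀),
      by simp [hcF₀, hcG₀], by push_cast; ring⟩
  | @geom F G hF hcF hG _ =>
    exact ⟨1, F * G, hF.mul (.geom hF hcF hG), by simp [hcF], by rwa [Nat.cast_one]⟩

theorem exists_constantCoeff_eq {F : MvPowerSeries (Fin k) ℕ} (hF : NRational k F) (c : ℕ) :
    ∃ G : MvPowerSeries (Fin k) ℕ, NRational k G ∧ constantCoeff G = c ∧
      ∀ μ ≠ 0, coeff μ G = coeff μ F := by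
  obtain ⟨d, F₀, hF₀, hcF₀, rfl⟩ := hF.exists_eq_natCast_add
  refine ⟨c + F₀, (natCast c).add hF₀, by simp [hcF₀], fun μ hμ => ?_⟩
  simp only [map_add, ← map_natCast (C (σ := Fin k)), coeff_C, if_neg hμ]

end NRational

theorem Finsupp.equivFunOnFinite_symm_const_eq_zero {σ : Type*} [Finite σ] [Nonempty σ]
    {n : ℕ} : Finsupp.equivFunOnFinite.symm (fun _ : σ => n) = 0 ↔ n = 0 := by
  simp [← Finsupp.coe_eq_zero, funext_iff]

/-- If `f` is a diagonal of an ℕ-rational generating function and `g` agrees with `f`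
for all `n ≥ 1`, then `g` is also a diagonal of an ℕ-rational generating function. -/
theorem diagonal_of_eventually_eq (k : ℕ) (hk : 1 ≤ k)
    (F : MvPowerSeries (Fin k) ℕ) (hF : NRational k F) (f g : ℕ → ℕ)
    (hf : ∀ n : ℕ,
      f n = MvPowerSeries.coeff (Finsupp.equivFunOnFinite.symm fun _ => n) F)
    (hfg : ∀ n : ℕ, 1 ≤ n → g n = f n) :
    ∃ (l : ℕ) (G : MvPowerSeries (Fin l) ℕ), 1 ≤ l ∧ NRational l G ∧
      ∀ n : ℕ,
        g n = MvPowerSeries.coeff (Finsupp.equivFunOnFinite.symm fun _ => n) G := by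
  have : Nonempty (Fin k) := ⟨⟨0, hk⟩⟩
  obtain ⟨G, hG, hcG, hGF⟩ := hF.exists_constantCoeff_eq (g 0)
  refine ⟨k, G, hk, hG, fun n => ?_⟩
  rcases Nat.eq_zero_or_pos n with rfl | hn
  · rw [Finsupp.equivFunOnFinite_symm_const_eq_zero.mpr rfl, coeff_zero_eq_constantCoeff_apply,
      hcG]
  · rw [hGF _ (Finsupp.equivFunOnFinite_symm_const_eq_zero.not.mpr hn.ne'), hfg n hn, hf n]
end

section
/- Let α₁,…,α_r and β₁,…,β_r be integer-coefficient affine functions on ℤ^d × ℤ, and suppose that for every n ∈ ℕ, only finitely many v ∈ ℤ^d give a nonzero product ∏_{i=1}^r C(α_i(v,n), β_i(v,n)). Then there exists a constant c ∈ ℕ such that for all integers n ≥ 1 and all v ∈ ℤ^d, if the product ∏_{i=1}^r C(α_i(v,n), β_i(v,n)) is nonzero, then |v_j| ≤ c·n for all coordinates j = 1,…,d. -/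
/-!
A term is nonzero exactly when, for some choice `ε` of the case of the definition of `mbinom`
used by each factor, `v` satisfies a finite system of integer affine inequalities in `(v, n)`.
Fourier–Motzkin elimination over `ℚ` shows that for each such system either the recession cone
`{w | a ⬝ᵥ w ≥ 0}` has a nonzero point, which after clearing denominators moves any integer
solution along an infinite ray of integer solutions and so contradicts finiteness, or the
solutions of the inequalities `a ⬝ᵥ x + b * s ≥ 0` satisfy `|x j| ≤ c * s`. Absorbing the
constant terms into the coefficient of `n ≥ 1` turns the latter into the linear bound.
-/

namespace FourierMotzkin

variable {𝕜 : Type*} {d : ℕ}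

section OrderedCommRing

variable [CommRing 𝕜]

/-- A pair `p = (a, b)` encodes the inequality `0 ≤ a ⬝ᵥ x + b * s` in the unknown `x`, with a
scalar parameter `s`; at `s = 0` the solutions form the recession cone. -/
def eval (p : (Fin d → 𝕜) × 𝕜) (x : Fin d → 𝕜) (s : 𝕜) : 𝕜 := p.1 ⬝ᵥ x + p.2 * s

def tail (p : (Fin (d + 1) → 𝕜) × 𝕜) : (Fin d → 𝕜) × 𝕜 := (Fin.tail p.1, p.2)

/-- For `0 < p.1 0` and `q.1 0 < 0` this is a positive combination of `p` and `q`. -/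
def combine (p q : (Fin (d + 1) → 𝕜) × 𝕜) : (Fin d → 𝕜) × 𝕜 :=
  (p.1 0 • Fin.tail q.1 - q.1 0 • Fin.tail p.1, p.1 0 * q.2 - q.1 0 * p.2)

theorem eval_eq_mul_add_eval_tail (p : (Fin (d + 1) → 𝕜) × 𝕜) (x : Fin (d + 1) → 𝕜) (s : 𝕜) :
    eval p x s = p.1 0 * x 0 + eval (tail p) (Fin.tail x) s := by
  simp only [eval, tail, dotProduct, Fin.sum_univ_succ, Fin.tail]
  ring

theorem eval_cons (p : (Fin (d + 1) → 𝕜) × 𝕜) (t : 𝕜) (y : Fin d → 𝕜) (s : 𝕜) :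
    eval p (Fin.cons t y) s = p.1 0 * t + eval (tail p) y s := by
  rw [eval_eq_mul_add_eval_tail, Fin.cons_zero, Fin.tail_cons]

theorem eval_combine (p q : (Fin (d + 1) → 𝕜) × 𝕜) (y : Fin d → 𝕜) (s : 𝕜) :
    eval (combine p q) y s = p.1 0 * eval (tail q) y s - q.1 0 * eval (tail p) y s := by
  simp only [eval, combine, tail, sub_dotProduct, smul_dotProduct, smul_eq_mul]
  ring

variable [LinearOrder 𝕜]

def solutions (S : Set ((Fin d → 𝕜) × 𝕜)) (s : 𝕜) : Set (Fin d → 𝕜) :=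
  {x | ∀ p ∈ S, 0 ≤ eval p x s}

def eliminate (S : Set ((Fin (d + 1) → 𝕜) × 𝕜)) : Set ((Fin d → 𝕜) × 𝕜) :=
  tail '' {p ∈ S | p.1 0 = 0} ∪ Set.image2 combine {p ∈ S | 0 < p.1 0} {q ∈ S | q.1 0 < 0}

theorem eliminate_finite {S : Set ((Fin (d + 1) → 𝕜) × 𝕜)} (hS : S.Finite) :
    (eliminate S).Finite :=
  ((hS.sep _).image _).union ((hS.sep _).image2 _ (hS.sep _))

variable [IsStrictOrderedRing 𝕜]

theorem tail_mem_solutions_eliminate {S : Set ((Fin (d + 1) → 𝕜) × 𝕜)} {x : Fin (d + 1) → 𝕜}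
    {s : 𝕜} (hx : x ∈ solutions S s) : Fin.tail x ∈ solutions (eliminate S) s := by
  rintro _ (⟨p, ⟨hp, hp0⟩, rfl⟩ | ⟨p, ⟨hp, hp0⟩, q, ⟨hq, hq0⟩, rfl⟩)
  · simpa [eval_eq_mul_add_eval_tail, hp0] using hx p hp
  · have hpx := hx p hp
    have hqx := hx q hq
    rw [eval_eq_mul_add_eval_tail] at hpx hqx
    rw [eval_combine]
    nlinarith

theorem abs_eval_le (p : (Fin d → 𝕜) × 𝕜) {y : Fin d → 𝕜} {c s : 𝕜} (hs : 0 ≤ s)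
    (hy : ∀ j, |y j| ≤ c * s) : |eval p y s| ≤ ((∑ j, |p.1 j|) * c + |p.2|) * s := by
  have hdot : |p.1 ⬝ᵥ y| ≤ (∑ j, |p.1 j|) * c * s :=
    calc |p.1 ⬝ᵥ y| ≤ ∑ j, |p.1 j| * |y j| := by
          simpa only [dotProduct, abs_mul] using
            Finset.abs_sum_le_sum_abs (fun j => p.1 j * y j) Finset.univ
      _ ≤ ∑ j, |p.1 j| * (c * s) := by gcongr with j; exact hy j
      _ = (∑ j, |p.1 j|) * c * s := by simp_rw [Finset.sum_mul, mul_assoc]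
  calc |eval p y s| ≤ |p.1 ⬝ᵥ y| + |p.2 * s| := abs_add_le _ _
    _ = |p.1 ⬝ᵥ y| + |p.2| * s := by rw [abs_mul, abs_of_nonneg hs]
    _ ≤ _ := by linarith

end OrderedCommRing

variable [Field 𝕜] [LinearOrder 𝕜] [IsStrictOrderedRing 𝕜]

/-- The largest of the lower bounds on the first unknown imposed by the rows with positive first
coefficient satisfies all rows. -/
theorem exists_cons_mem_solutions {S : Set ((Fin (d + 1) → 𝕜) × 𝕜)} (hS : S.Finite)
    (hpos : ∃ p ∈ S, 0 < p.1 0) {y : Fin d → 𝕜} {s : 𝕜} (hy : y ∈ solutions (eliminate S) s) :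
    ∃ t, Fin.cons t y ∈ solutions S s := by
  obtain ⟨k, ⟨hk, hk0⟩, hmax⟩ := Set.exists_max_image {p ∈ S | 0 < p.1 0}
    (fun p => -eval (tail p) y s / p.1 0) (hS.sep _) hpos
  refine ⟨-eval (tail k) y s / k.1 0, fun p hp => ?_⟩
  rw [eval_cons]
  rcases lt_trichotomy (p.1 0) 0 with hp0 | hp0 | hp0
  · have hkp := hy _ (Or.inr ⟨k, ⟨hk, hk0⟩, p, ⟨hp, hp0⟩, rfl⟩)
    rw [eval_combine] at hkp
    have : p.1 0 * (-eval (tail k) y s / k.1 0) + eval (tail p) y s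
        = (k.1 0 * eval (tail p) y s - p.1 0 * eval (tail k) y s) / k.1 0 := by
      field_simp
      ring
    rw [this]
    exact div_nonneg hkp hk0.le
  · simpa [hp0] using hy _ (Or.inl ⟨p, ⟨hp, hp0⟩, rfl⟩)
  · have := (div_le_iff₀ hp0).1 (hmax p ⟨hp, hp0⟩)
    linarith

theorem exists_bound_of_eliminate {S : Set ((Fin (d + 1) → 𝕜) × 𝕜)}
    (hpos : ∃ p ∈ S, 0 < p.1 0) (hneg : ∃ q ∈ S, q.1 0 < 0) {c : 𝕜}
    (hc : ∀ s, 0 ≤ s → ∀ y ∈ solutions (eliminate S) s, ∀ j, |y j| ≤ c * s) :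
    ∃ c', ∀ s, 0 ≤ s → ∀ x ∈ solutions S s, ∀ j, |x j| ≤ c' * s := by
  obtain ⟨p, hp, hp0⟩ := hpos
  obtain ⟨q, hq, hq0⟩ := hneg
  let M : (Fin (d + 1) → 𝕜) × 𝕜 → 𝕜 := fun r => (∑ j, |(tail r).1 j|) * c + |r.2|
  refine ⟨max c (max (M p / p.1 0) (M q / -q.1 0)), fun s hs x hx j => ?_⟩
  have hy := hc s hs _ (tail_mem_solutions_eliminate hx)
  refine Fin.cases ?_ (fun j => (hy j).trans (by gcongr; exact le_max_left _ _)) j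
  have hpx := hx p hp
  have hqx := hx q hq
  rw [eval_eq_mul_add_eval_tail] at hpx hqx
  have hpM : |eval (tail p) (Fin.tail x) s| ≤ M p * s := abs_eval_le _ hs hy
  have hqM : |eval (tail q) (Fin.tail x) s| ≤ M q * s := abs_eval_le _ hs hy
  have hlow : -(M p / p.1 0 * s) ≤ x 0 := by
    rw [neg_le, div_mul_eq_mul_div, le_div_iff₀ hp0]
    linarith [le_of_abs_le hpM]
  have hupp : x 0 ≤ M q / -q.1 0 * s := by
    rw [div_mul_eq_mul_div, le_div_iff₀ (neg_pos.2 hq0)]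
    linarith [le_of_abs_le hqM]
  refine abs_le.2 ⟨le_trans ?_ hlow, hupp.trans ?_⟩
  · gcongr
    exact (le_max_left _ _).trans (le_max_right _ _)
  · gcongr
    exact (le_max_right _ _).trans (le_max_right _ _)

theorem exists_mem_solutions_zero_or_bounded {S : Set ((Fin d → 𝕜) × 𝕜)} (hS : S.Finite) :
    (∃ w ≠ 0, w ∈ solutions S 0) ∨
      ∃ c, ∀ s, 0 ≤ s → ∀ x ∈ solutions S s, ∀ j, |x j| ≤ c * s := by
  induction d with
  | zero => exact Or.inr ⟨0, fun _ _ _ _ j => j.elim0⟩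
  | succ d ih =>
    by_cases hpos : ∃ p ∈ S, 0 < p.1 0
    swap
    · simp only [not_exists, not_and, not_lt] at hpos
      exact Or.inl ⟨Pi.single 0 (-1), by simp, fun p hp => by simpa [eval] using hpos p hp⟩
    by_cases hneg : ∃ q ∈ S, q.1 0 < 0
    swap
    · simp only [not_exists, not_and, not_lt] at hneg
      exact Or.inl ⟨Pi.single 0 1, by simp, fun p hp => by simpa [eval] using hneg p hp⟩
    rcases ih (eliminate_finite hS) with ⟨w, hw0, hw⟩ | ⟨c, hc⟩
    · obtain ⟨t, ht⟩ := exists_cons_mem_solutions hS hpos hw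
      refine Or.inl ⟨Fin.cons t w, fun h => hw0 (funext fun j => ?_), ht⟩
      simpa using congrFun h j.succ
    · exact Or.inr (exists_bound_of_eliminate hpos hneg hc)

end FourierMotzkin

theorem intCast_dotProduct {R ι : Type*} [Ring R] [Fintype ι] (a v : ι → ℤ) :
    ((a ⬝ᵥ v : ℤ) : R) = (Int.cast ∘ a) ⬝ᵥ (Int.cast ∘ v) := by
  simpa using (Int.castRingHom R).map_dotProduct a v

theorem Rat.exists_pos_smul_eq_intCast {ι : Type*} [Fintype ι] (w : ι → ℚ) :
    ∃ D : ℚ, 0 < D ∧ ∃ z : ι → ℤ, Int.cast ∘ z = D • w := by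
  classical
  refine ⟨∏ j, ((w j).den : ℚ), by positivity,
    fun j => (w j).num * ∏ i ∈ Finset.univ.erase j, ((w i).den : ℤ), funext fun j => ?_⟩
  simp only [Function.comp_apply, Pi.smul_apply, smul_eq_mul]
  rw [← Finset.mul_prod_erase _ _ (Finset.mem_univ j)]
  push_cast
  rw [← Rat.mul_den_eq_num]
  ring

theorem mbinom_ne_zero_iff {a b : ℤ} : mbinom a b ≠ 0 ↔ (0 ≤ b ∧ b ≤ a) ∨ (a = -1 ∧ b = 0) := by
  unfold mbinom
  split_ifs with h₁ h₂
  · simp [(Nat.choose_pos (Int.toNat_le_toNat h₁.2)).ne', h₁]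
  · simp [h₂]
  · simp [h₁, h₂]

/-- `(a, a', a'')` stands for the integer affine function `(v, n) ↦ a ⬝ᵥ v + a' * n + a''`. -/
abbrev AffineForm (d : ℕ) := (Fin d → ℤ) × ℤ × ℤ

namespace AffineForm

variable {d : ℕ}

def evalAt (n : ℕ) (v : Fin d → ℤ) : AffineForm d →+ ℤ where
  toFun f := f.1 ⬝ᵥ v + f.2.1 * n + f.2.2
  map_zero' := by simp
  map_add' f g := by
    simp only [Prod.fst_add, Prod.snd_add, add_dotProduct]
    ring

def solutions (S : Set (AffineForm d)) (n : ℕ) : Set (Fin d → ℤ) :=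
  {v | ∀ f ∈ S, 0 ≤ evalAt n v f}

theorem solutions_iUnion {ι : Sort*} (S : ι → Set (AffineForm d)) (n : ℕ) :
    solutions (⋃ i, S i) n = ⋂ i, solutions (S i) n := by
  ext v
  simp only [solutions, Set.mem_iUnion, Set.mem_iInter, Set.mem_ofPred_eq, forall_exists_index]
  exact forall_comm

theorem evalAt_add_smul (f : AffineForm d) (n : ℕ) (v z : Fin d → ℤ) (t : ℤ) :
    evalAt n (v + t • z) f = evalAt n v f + t * (f.1 ⬝ᵥ z) := by
  simp only [evalAt, AddMonoidHom.coe_mk, ZeroHom.coe_mk, dotProduct_add, dotProduct_smul,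
    smul_eq_mul]
  ring

theorem solutions_infinite {S : Set (AffineForm d)} {z : Fin d → ℤ} (hz0 : z ≠ 0)
    (hz : ∀ f ∈ S, 0 ≤ f.1 ⬝ᵥ z) {n : ℕ} {v : Fin d → ℤ} (hv : v ∈ solutions S n) :
    (solutions S n).Infinite := by
  refine Set.infinite_of_injective_forall_mem (f := fun t : ℕ => v + (t : ℤ) • z)
    (fun t₁ t₂ h => Nat.cast_injective (smul_left_injective ℤ hz0 (add_left_cancel h)))
    (fun t f hf => ?_)
  rw [evalAt_add_smul]
  exact add_nonneg (hv f hf) (mul_nonneg t.cast_nonneg (hz f hf))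

/-- Since `a'' ≤ |a''| * n` for `n ≥ 1`, the rational inequality `(a, a' + |a''|)` holds at every
integer solution `v` of `f`, with parameter `s = n`. -/
def toRat (f : AffineForm d) : (Fin d → ℚ) × ℚ := (Int.cast ∘ f.1, ((f.2.1 + |f.2.2| : ℤ) : ℚ))

theorem intCast_mem_solutions_toRat {S : Set (AffineForm d)} {n : ℕ} (hn : 1 ≤ n)
    {v : Fin d → ℤ} (hv : v ∈ solutions S n) :
    Int.cast ∘ v ∈ FourierMotzkin.solutions (toRat '' S) (n : ℚ) := by
  rintro _ ⟨f, hf, rfl⟩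
  have hconst : f.2.2 ≤ |f.2.2| * n :=
    (le_abs_self _).trans (le_mul_of_one_le_right (abs_nonneg _) (by exact_mod_cast hn))
  have hf' : 0 ≤ f.1 ⬝ᵥ v + (f.2.1 + |f.2.2|) * n := by
    have := hv f hf
    simp only [evalAt, AddMonoidHom.coe_mk, ZeroHom.coe_mk] at this
    linarith
  simp only [FourierMotzkin.eval, toRat, ← intCast_dotProduct]
  exact_mod_cast hf'

theorem exists_int_mem_recession {S : Set (AffineForm d)} {w : Fin d → ℚ} (hw0 : w ≠ 0)
    (hw : w ∈ FourierMotzkin.solutions (toRat '' S) 0) : ∃ z ≠ 0, ∀ f ∈ S, 0 ≤ f.1 ⬝ᵥ z := by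
  obtain ⟨D, hD, z, hz⟩ := Rat.exists_pos_smul_eq_intCast w
  refine ⟨z, fun h => hw0 ?_, fun f hf => ?_⟩
  · simpa [h, hD.ne'] using hz.symm
  · have hfz : ((f.1 ⬝ᵥ z : ℤ) : ℚ) = D * (Int.cast ∘ f.1 ⬝ᵥ w) := by
      rw [intCast_dotProduct, hz, dotProduct_smul, smul_eq_mul]
    have hfw : 0 ≤ Int.cast ∘ f.1 ⬝ᵥ w := by
      simpa [FourierMotzkin.eval, toRat] using hw _ ⟨f, hf, rfl⟩
    exact_mod_cast hfz ▸ mul_nonneg hD.le hfw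

theorem exists_linear_bound {S : Set (AffineForm d)} (hS : S.Finite)
    (hfin : ∀ n, (solutions S n).Finite) :
    ∃ c : ℕ, ∀ n, 1 ≤ n → ∀ v ∈ solutions S n, ∀ j, |v j| ≤ c * n := by
  rcases FourierMotzkin.exists_mem_solutions_zero_or_bounded (hS.image toRat) with
    ⟨w, hw0, hw⟩ | ⟨c, hc⟩
  · obtain ⟨z, hz0, hz⟩ := exists_int_mem_recession hw0 hw
    exact ⟨0, fun n _ v hv => absurd (hfin n) (solutions_infinite hz0 hz hv)⟩
  · refine ⟨⌈c⌉₊, fun n hn v hv j => ?_⟩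
    have hq : |(v j : ℚ)| ≤ ⌈c⌉₊ * n :=
      (hc n n.cast_nonneg _ (intCast_mem_solutions_toRat hn hv) j).trans
        (by gcongr; exact Nat.le_ceil c)
    exact_mod_cast hq

/-- `binomCell α β true` says `0 ≤ β ≤ α` and `binomCell α β false` says `α = -1 ∧ β = 0`: the two
ways in which `C(α, β)` can be nonzero. -/
def binomCell (α β : AffineForm d) : Bool → Set (AffineForm d)
  | true => {β, α - β}
  | false => {α + (0, 0, 1), -(α + (0, 0, 1)), β, -β}

theorem binomCell_finite (α β : AffineForm d) (b : Bool) : (binomCell α β b).Finite := by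
  cases b <;> simp only [binomCell] <;> exact Set.toFinite _

theorem mbinom_evalAt_ne_zero_iff (α β : AffineForm d) (n : ℕ) (v : Fin d → ℤ) :
    mbinom (evalAt n v α) (evalAt n v β) ≠ 0 ↔ ∃ b, v ∈ solutions (binomCell α β b) n := by
  have hone : evalAt n v (0, 0, 1) = 1 := by simp [evalAt]
  simp only [mbinom_ne_zero_iff, solutions, binomCell, Bool.exists_bool, Set.mem_insert_iff,
    Set.mem_singleton_iff, forall_eq_or_imp, forall_eq, Set.mem_ofPred_eq, map_add, map_neg,
    map_sub, hone]
  omega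

end AffineForm

open AffineForm

section Multisum

variable {r d : ℕ} (A B : Fin r → Fin d → ℤ) (a' a'' b' b'' : Fin r → ℤ)

def multisumSystem (ε : Fin r → Bool) : Set (AffineForm d) :=
  ⋃ i, binomCell (A i, a' i, a'' i) (B i, b' i, b'' i) (ε i)

theorem multisumSystem_finite (ε : Fin r → Bool) :
    (multisumSystem A B a' a'' b' b'' ε).Finite :=
  Set.finite_iUnion fun _ => binomCell_finite _ _ _

theorem multisumTerm_ne_zero_iff (n : ℕ) (v : Fin d → ℤ) :
    multisumTerm A B a' a'' b' b'' n v ≠ 0 ↔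
      ∃ ε, v ∈ solutions (multisumSystem A B a' a'' b' b'' ε) n := by
  change ∏ i, mbinom (evalAt n v (A i, a' i, a'' i)) (evalAt n v (B i, b' i, b'' i)) ≠ 0 ↔ _
  simp only [Finset.prod_ne_zero_iff, Finset.mem_univ, forall_const, mbinom_evalAt_ne_zero_iff,
    Classical.skolem, multisumSystem, solutions_iUnion, Set.mem_iInter]

end Multisum

/-- **Linear bound on contributing terms of a binomial multisum**: if for every `n` only
finitely many `v ∈ ℤ^d` give a nonzero product, then there is a constant `c` such that
for all `n ≥ 1` every contributing `v` satisfies `|v_j| ≤ c·n` in each coordinate. -/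
theorem binomialMultisum_support_linear_bound (r d : ℕ)
    (A B : Fin r → Fin d → ℤ) (a' a'' b' b'' : Fin r → ℤ)
    (hfin : ∀ n : ℕ, (Function.support (multisumTerm A B a' a'' b' b'' n)).Finite) :
    ∃ c : ℕ, ∀ n : ℕ, 1 ≤ n → ∀ v : Fin d → ℤ,
      multisumTerm A B a' a'' b' b'' n v ≠ 0 → ∀ j : Fin d, |v j| ≤ (c : ℤ) * n := by
  have hbound (ε : Fin r → Bool) : ∃ c : ℕ, ∀ n, 1 ≤ n →
      ∀ v ∈ solutions (multisumSystem A B a' a'' b' b'' ε) n, ∀ j, |v j| ≤ c * n :=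
    exists_linear_bound (multisumSystem_finite A B a' a'' b' b'' ε) fun n =>
      (hfin n).subset fun v hv => (multisumTerm_ne_zero_iff A B a' a'' b' b'' n v).2 ⟨ε, hv⟩
  choose c hc using hbound
  refine ⟨Finset.univ.sup c, fun n hn v hv j => ?_⟩
  obtain ⟨ε, hε⟩ := (multisumTerm_ne_zero_iff A B a' a'' b' b'' n v).1 hv
  calc |v j| ≤ c ε * n := hc ε n hn v hε j
    _ ≤ Finset.univ.sup c * n := by gcongr; exact Finset.le_sup (Finset.mem_univ ε)
end
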